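/- arXiv:1309.2237 — 2 statements merged into one kernel-verified Lean document; each statement's English description precedes it below -/
import Mathlib

section
/- Let F be a finite field, let n ≥ 4, and let Z be any central subgroup of SL_n(F). Then the commuting graph of SL_n(F)/Z is not perfect. In particular the commuting graphs of SL_n(F) and of PSL_n(F) are not perfect for all n ≥ 4 and all finite fields F. -/
open SimpleGraph

/-- A simple graph is *perfect* if every induced subgraph has chromatic number
equal to its clique number. -/
def SimpleGraph.IsPerfectGraph {V : Type*} (G : SimpleGraph V) : Prop :=
  ∀ s : Set V, (G.induce s).chromaticNumber = ((G.induce s).cliqueNum : ℕ∞)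

/-- The commuting graph of a group `G`: vertices are the non-central elements of `G`,
with distinct vertices joined by an edge whenever they commute. -/
def commGraph (G : Type*) [Group G] :
    SimpleGraph {g : G // g ∉ Subgroup.center G} where
  Adj x y := x ≠ y ∧ Commute (x : G) (y : G)
  symm := ⟨fun _ _ h => ⟨h.1.symm, h.2.symm⟩⟩
  loopless := ⟨fun _ h => h.1 rfl⟩

/-!
Five transvections `E₀₁, E₀₂, E₁₂, E₁₀, E₂₃` of `SL_n(F)` (for `n ≥ 4`) span an induced pentagon
in the commuting graph of `SL_n(F)/Z`: modulo a central subgroup, which consists of scalars,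
`E_ij` and `E_kl` commute exactly when `j ≠ k` and `l ≠ i`, as comparing two entries of
`E_kl E_ij` and of a scalar multiple of `E_ij E_kl` shows. An induced `5`-cycle has chromatic
number `3` but clique number `2`, so the graph is not perfect.
-/

namespace SimpleGraph

variable {V : Type*} {G : SimpleGraph V}

lemma cliqueNum_lt_of_cliqueFree {k : ℕ} (h : G.CliqueFree k) : G.cliqueNum < k := by
  obtain ⟨s, hs⟩ := G.exists_isNClique_cliqueNum
  by_contra hk
  exact h.mono (not_lt.mp hk) s hs

lemma cycleGraph_cliqueFree_three {n : ℕ} (hn : 4 ≤ n) : (cycleGraph n).CliqueFree 3 := by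
  have adj_val : ∀ u v : Fin n, (cycleGraph n).Adj u v →
      u.val + 1 = v.val ∨ v.val + 1 = u.val ∨
        u.val + 1 = v.val + n ∨ v.val + 1 = u.val + n := by
    intro u v huv
    rw [cycleGraph_adj'] at huv
    rcases le_or_gt v u with h | h <;> rcases le_or_gt u v with h' | h' <;>
      simp only [Fin.coe_sub_iff_le.mpr, Fin.coe_sub_iff_lt.mpr, h, h'] at huv <;> omega
  intro s hs
  obtain ⟨a, b, c, hab, hac, hbc, -⟩ := is3Clique_iff.mp hs
  have h₁ := adj_val a b hab
  have h₂ := adj_val a c hac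
  have h₃ := adj_val b c hbc
  omega

lemma not_isPerfectGraph_of_embedding_cycleGraph {n : ℕ} (hn : 4 ≤ n) (hodd : Odd n)
    (f : cycleGraph n ↪g G) : ¬ G.IsPerfectGraph := by
  intro hG
  let e := f.isoInduceRange
  have hχ : (G.induce (Set.range f)).chromaticNumber = 3 := by
    rw [← chromaticNumber_cycleGraph_of_odd n (by omega) hodd]
    exact le_antisymm (chromaticNumber_mono_of_hom e.symm.toHom)
      (chromaticNumber_mono_of_hom e.toHom)
  have hω : (G.induce (Set.range f)).cliqueNum < 3 :=
    cliqueNum_lt_of_cliqueFree ((cycleGraph_cliqueFree_three hn).comap ⟨e.symm.toCopy⟩)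
  have h3 : ((G.induce (Set.range f)).cliqueNum : ℕ∞) = 3 := (hG _).symm.trans hχ
  exact hω.ne (by exact_mod_cast h3)

end SimpleGraph

namespace Matrix.SpecialLinearGroup

-- Cyclically consecutive arcs `(i, j)`, `(k, l)` are exactly those with `j ≠ k` and `l ≠ i`.
def pentagonArc : Fin 5 → Fin 4 × Fin 4 := ![(0, 1), (0, 2), (1, 2), (1, 0), (2, 3)]

lemma pentagonArc_fst_ne_snd (a : Fin 5) : (pentagonArc a).1 ≠ (pentagonArc a).2 := by
  revert a; decide

lemma cycleGraph_five_adj_iff (a b : Fin 5) :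
    (cycleGraph 5).Adj a b ↔ a ≠ b ∧
      (pentagonArc a).2 ≠ (pentagonArc b).1 ∧ (pentagonArc b).2 ≠ (pentagonArc a).1 := by
  revert a b; decide

variable {ι R : Type*} [Fintype ι] [DecidableEq ι] [CommRing R]

lemma commute_transvection {i j k l : ι} (hij : i ≠ j) (hkl : k ≠ l) (hjk : j ≠ k)
    (hli : l ≠ i) (b c : R) : Commute (transvection hij b) (transvection hkl c) :=
  Subtype.ext <| by
    simp only [coe_mul, transvection_coe, add_mul, mul_add, one_mul, mul_one,
      single_mul_single_of_ne _ _ _ _ hjk, single_mul_single_of_ne _ _ _ _ hli]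
    abel

variable {Z : Subgroup (SpecialLinearGroup ι R)}

lemma exists_smul_eq_of_mk_eq (hZ : Z ≤ Subgroup.center (SpecialLinearGroup ι R))
    {x y : SpecialLinearGroup ι R} (h : (x : SpecialLinearGroup ι R ⧸ Z) = y) :
    ∃ r : R, (y : Matrix ι ι R) = r • (x : Matrix ι ι R) := by
  obtain ⟨r, -, hr⟩ := mem_center_iff.mp (hZ (QuotientGroup.eq.mp h))
  refine ⟨r, ?_⟩
  calc (y : Matrix ι ι R) = ↑(x * (x⁻¹ * y)) := by rw [mul_inv_cancel_left]
    _ = x * scalar ι r := by rw [coe_mul, hr]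
    _ = r • (x : Matrix ι ι R) := by
      rw [scalar_apply, ← smul_one_eq_diagonal, Matrix.mul_smul, mul_one]

lemma exists_smul_mul_eq_of_commute_mk [Z.Normal]
    (hZ : Z ≤ Subgroup.center (SpecialLinearGroup ι R))
    {x y : SpecialLinearGroup ι R} (h : Commute (x : SpecialLinearGroup ι R ⧸ Z) y) :
    ∃ r : R, ((y * x : SpecialLinearGroup ι R) : Matrix ι ι R) = r • ↑(x * y) :=
  exists_smul_eq_of_mk_eq hZ (by rw [QuotientGroup.mk_mul, QuotientGroup.mk_mul]; exact h.eq)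

variable [Nontrivial R] (hZ : Z ≤ Subgroup.center (SpecialLinearGroup ι R))
include hZ

lemma mk_transvection_one_inj {i j k l : ι} (hij : i ≠ j) (hkl : k ≠ l)
    (h : (transvection hij (1 : R) : SpecialLinearGroup ι R ⧸ Z) = transvection hkl (1 : R)) :
    k = i ∧ l = j := by
  obtain ⟨r, hr⟩ := exists_smul_eq_of_mk_eq hZ h
  by_contra hne
  have hkli : ¬ (k = i ∧ l = i) := fun hki => hkl (hki.1.trans hki.2.symm)
  have hii : (1 : R) = r := by
    simpa [transvection_coe, hij, hij.symm, hkli] using congrFun₂ hr i i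
  have hij' : (0 : R) = r := by
    simpa [transvection_coe, hij, hij.symm, hne] using congrFun₂ hr i j
  exact one_ne_zero (hii.trans hij'.symm)

variable [Z.Normal]

lemma not_commute_mk_transvection_one_of_ne {i j l : ι} (hij : i ≠ j) (hjl : j ≠ l)
    (hil : i ≠ l) :
    ¬ Commute (transvection hij (1 : R) : SpecialLinearGroup ι R ⧸ Z)
      (transvection hjl (1 : R)) := by
  intro h
  obtain ⟨r, hr⟩ := exists_smul_mul_eq_of_commute_mk hZ h
  have hll : (1 : R) = r := by
    simpa [transvection_coe, add_mul, mul_add, hjl, hil, hil.symm] using congrFun₂ hr l l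
  have hil' : (0 : R) = r := by
    simpa [transvection_coe, add_mul, mul_add, single_mul_single_of_ne, hjl, hil, hil.symm,
      hij.symm] using congrFun₂ hr i l
  exact one_ne_zero (hll.trans hil'.symm)

lemma not_commute_mk_transvection_one_swap {i j : ι} (hij : i ≠ j) :
    ¬ Commute (transvection hij (1 : R) : SpecialLinearGroup ι R ⧸ Z)
      (transvection hij.symm (1 : R)) := by
  intro h
  obtain ⟨r, hr⟩ := exists_smul_mul_eq_of_commute_mk hZ h
  have hij' : (1 : R) = r := by
    simpa [transvection_coe, add_mul, mul_add, hij, hij.symm] using congrFun₂ hr i j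
  have hii : (1 : R) = r + r := by
    simpa [transvection_coe, add_mul, mul_add, hij, hij.symm] using congrFun₂ hr i i
  rw [← hij'] at hii
  exact one_ne_zero (left_eq_add.mp hii)

lemma commute_mk_transvection_one_iff {i j k l : ι} (hij : i ≠ j) (hkl : k ≠ l) :
    Commute (transvection hij (1 : R) : SpecialLinearGroup ι R ⧸ Z) (transvection hkl (1 : R))
      ↔ j ≠ k ∧ l ≠ i := by
  refine ⟨fun h => ?_, fun ⟨hjk, hli⟩ =>
    (commute_transvection hij hkl hjk hli 1 1).map (QuotientGroup.mk' Z)⟩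
  by_contra hc
  by_cases hjk : j = k
  · subst hjk
    by_cases hli : l = i
    · subst hli
      exact not_commute_mk_transvection_one_swap hZ hij h
    · exact not_commute_mk_transvection_one_of_ne hZ hij hkl (Ne.symm hli) h
  · obtain rfl : l = i := by tauto
    exact not_commute_mk_transvection_one_of_ne hZ hkl hij (Ne.symm hjk) h.symm

lemma mk_transvection_one_not_mem_center {i j : ι} (hij : i ≠ j) :
    (transvection hij (1 : R) : SpecialLinearGroup ι R ⧸ Z) ∉
      Subgroup.center (SpecialLinearGroup ι R ⧸ Z) := fun h =>
  not_commute_mk_transvection_one_swap hZ hij (Subgroup.mem_center_iff.mp h _).symm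

noncomputable def pentagonVertex (e : Fin 4 ↪ ι) (a : Fin 5) :
    {g : SpecialLinearGroup ι R ⧸ Z // g ∉ Subgroup.center (SpecialLinearGroup ι R ⧸ Z)} :=
  ⟨transvection (e.injective.ne (pentagonArc_fst_ne_snd a)) (1 : R),
    mk_transvection_one_not_mem_center hZ _⟩

lemma pentagonVertex_injective (e : Fin 4 ↪ ι) : Function.Injective (pentagonVertex hZ e) := by
  intro a b h
  obtain ⟨h1, h2⟩ := mk_transvection_one_inj hZ _ _ (congrArg Subtype.val h)
  have arc_injective : Function.Injective pentagonArc := by decide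
  exact arc_injective (Prod.ext (e.injective h1.symm) (e.injective h2.symm))

lemma commute_pentagonVertex_iff (e : Fin 4 ↪ ι) (a b : Fin 5) :
    Commute (pentagonVertex hZ e a : SpecialLinearGroup ι R ⧸ Z) (pentagonVertex hZ e b) ↔
      (pentagonArc a).2 ≠ (pentagonArc b).1 ∧ (pentagonArc b).2 ≠ (pentagonArc a).1 := by
  rw [pentagonVertex, pentagonVertex, commute_mk_transvection_one_iff hZ, e.injective.ne_iff,
    e.injective.ne_iff]

noncomputable def pentagonEmbedding (e : Fin 4 ↪ ι) :
    cycleGraph 5 ↪g commGraph (SpecialLinearGroup ι R ⧸ Z) where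
  toFun := pentagonVertex hZ e
  inj' := pentagonVertex_injective hZ e
  map_rel_iff' {a b} := by
    rw [cycleGraph_five_adj_iff, ← (pentagonVertex_injective hZ e).ne_iff,
      ← commute_pentagonVertex_iff hZ]
    rfl

end Matrix.SpecialLinearGroup

theorem sln_central_quotient_commGraph_not_isPerfect_general
    (F : Type*) [Field F] (n : ℕ) (hn : 4 ≤ n)
    (Z : Subgroup (Matrix.SpecialLinearGroup (Fin n) F)) [Z.Normal]
    (hZ : Z ≤ Subgroup.center (Matrix.SpecialLinearGroup (Fin n) F)) :
    ¬ (commGraph (Matrix.SpecialLinearGroup (Fin n) F ⧸ Z)).IsPerfectGraph :=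
  not_isPerfectGraph_of_embedding_cycleGraph (by norm_num) (by decide)
    (Matrix.SpecialLinearGroup.pentagonEmbedding hZ (Fin.castLEEmb hn))

theorem sln_central_quotient_commGraph_not_isPerfect
    (F : Type*) [Field F] [Fintype F] (n : ℕ) (hn : 4 ≤ n)
    (Z : Subgroup (Matrix.SpecialLinearGroup (Fin n) F)) [Z.Normal]
    (hZ : Z ≤ Subgroup.center (Matrix.SpecialLinearGroup (Fin n) F)) :
    ¬ (commGraph (Matrix.SpecialLinearGroup (Fin n) F ⧸ Z)).IsPerfectGraph :=
  sln_central_quotient_commGraph_not_isPerfect_general F n hn Z hZ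
end

section
/- Let G be a finite group and let K and L be subgroups of G that centralize one another (every element of K commutes with every element of L). Suppose that the commuting graph Γ(K) contains a 4-chain, i.e. an induced subgraph isomorphic to a path on four vertices, and that L is non-abelian. Then the commuting graph Γ(G) is not perfect. -/
open SimpleGraph

/-- A graph *contains a 4-chain* if it has an induced subgraph isomorphic to the
path graph on four vertices. -/
def SimpleGraph.ContainsFourChain {V : Type*} (Γ : SimpleGraph V) : Prop :=
  ∃ S : Set V, Nonempty (Γ.induce S ≃g pathGraph 4)

/-!
Let `a — b — c — d` be an induced path in `Γ(K)` and let `x, y ∈ L` not commute. As `K` and `L`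
centralise each other, multiplying an element of `K` by `x` changes nothing about whom it commutes
with inside `K`, while `y` commutes with all of `K` but not with `x`. Hence `c x, d, y, a, b x`
commute exactly with their cyclic neighbours: they span an induced pentagon in `Γ(G)`, which has
clique number 2 but chromatic number 3.
-/

namespace SimpleGraph

variable {V W : Type*} {Γ : SimpleGraph V} {H : SimpleGraph W}

theorem cliqueNum_le_of_cliqueFree {n : ℕ} (h : Γ.CliqueFree (n + 1)) : Γ.cliqueNum ≤ n := by
  obtain ⟨s, hs⟩ := Γ.exists_isNClique_cliqueNum
  exact Nat.le_of_lt_succ (lt_of_not_ge fun hle => h.mono hle s hs)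

theorem IsPerfectGraph.colorable_of_embedding (hΓ : Γ.IsPerfectGraph) (φ : H ↪g Γ) {n : ℕ}
    (hH : H.CliqueFree (n + 1)) : H.Colorable n := by
  let e := φ.isoInduceRange
  have hfree : (Γ.induce (Set.range φ)).CliqueFree (n + 1) :=
    hH.comap e.symm.toEmbedding.isContained
  have hχ : (Γ.induce (Set.range φ)).chromaticNumber ≤ n := by
    rw [hΓ]
    exact_mod_cast cliqueNum_le_of_cliqueFree hfree
  exact (chromaticNumber_le_iff_colorable.mp hχ).of_hom e.toHom

theorem cycleGraph_five_cliqueFree_three : (cycleGraph 5).CliqueFree 3 :=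
  cliqueFinset_eq_empty_iff.mp (by decide)

theorem cycleGraph_five_not_colorable_two : ¬(cycleGraph 5).Colorable 2 := by
  rw [← chromaticNumber_le_iff_colorable, chromaticNumber_cycleGraph_of_odd 5 (by norm_num)
    (by decide)]
  decide

theorem not_isPerfectGraph_of_cycleGraph_five_embedding (φ : cycleGraph 5 ↪g Γ) :
    ¬Γ.IsPerfectGraph := fun hΓ =>
  cycleGraph_five_not_colorable_two (hΓ.colorable_of_embedding φ cycleGraph_five_cliqueFree_three)

theorem ContainsFourChain.exists_path (h : Γ.ContainsFourChain) :
    ∃ a b c d : V, Γ.Adj a b ∧ Γ.Adj b c ∧ Γ.Adj c d ∧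
      ¬Γ.Adj a c ∧ ¬Γ.Adj a d ∧ ¬Γ.Adj b d ∧ a ≠ c ∧ a ≠ d ∧ b ≠ d := by
  obtain ⟨S, ⟨e⟩⟩ := h
  let ψ : pathGraph 4 ↪g Γ := (Embedding.induce S).comp e.symm.toEmbedding
  have hadj : ∀ i j, Γ.Adj (ψ i) (ψ j) ↔ (pathGraph 4).Adj i j := fun _ _ => ψ.map_adj_iff
  refine ⟨ψ 0, ψ 1, ψ 2, ψ 3, ?_, ?_, ?_, ?_, ?_, ?_, ?_, ?_, ?_⟩ <;>
    first
    | simp only [hadj, pathGraph_adj]; decide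
    | exact ψ.injective.ne (by decide)

end SimpleGraph

section Commute

variable {G : Type*} [Group G] {a b c : G}

theorem Commute.commute_mul_iff_right (h : Commute a c) : Commute (a * b) c ↔ Commute b c :=
  ⟨fun hab => by simpa using h.inv_left.mul_left hab, h.mul_left⟩

theorem Commute.commute_mul_iff_left (h : Commute b c) : Commute (a * b) c ↔ Commute a c :=
  ⟨fun hab => by simpa using hab.mul_left h.inv_left, fun ha => ha.mul_left h⟩

end Commute

namespace commGraph

variable {G : Type*} [Group G]

theorem adj_iff {x y : {g : G // g ∉ Subgroup.center G}} :
    (commGraph G).Adj x y ↔ (x : G) ≠ y ∧ Commute (x : G) y :=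
  Subtype.ext_iff.not.and Iff.rfl

/-- `hsep` (distinct closed neighbourhoods) makes `f` injective and `hdom` keeps its values out
of the centre, so commutation alone determines an induced copy of `H`. -/
theorem nonempty_embedding_of_commute_iff {W : Type*} (H : SimpleGraph W) (f : W → G)
    (hf : ∀ i j, Commute (f i) (f j) ↔ H.Adj i j ∨ i = j)
    (hsep : ∀ i j, (∀ k, H.Adj i k ∨ i = k ↔ H.Adj j k ∨ j = k) → i = j)
    (hdom : ∀ i, ∃ k, ¬(H.Adj i k ∨ i = k)) :
    Nonempty (H ↪g commGraph G) := by
  have hcentral (i : W) : f i ∉ Subgroup.center G := fun hi =>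
    (hdom i).elim fun k hk => hk ((hf i k).mp (Subgroup.mem_center_iff.mp hi (f k)).symm)
  have hinj : Function.Injective f := fun i j hij =>
    hsep i j fun k => by rw [← hf, ← hf, hij]
  refine ⟨⟨⟨fun i => ⟨f i, hcentral i⟩, fun i j hij => hinj (congrArg Subtype.val hij)⟩, ?_⟩⟩
  intro i j
  rw [adj_iff]
  change f i ≠ f j ∧ Commute (f i) (f j) ↔ H.Adj i j
  rw [hinj.ne_iff, hf]
  exact ⟨fun ⟨hne, h⟩ => h.resolve_right hne, fun h => ⟨H.ne_of_adj h, Or.inl h⟩⟩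

theorem nonempty_cycleGraph_five_embedding {v₀ v₁ v₂ v₃ v₄ : G}
    (h₀₁ : Commute v₀ v₁) (h₁₂ : Commute v₁ v₂) (h₂₃ : Commute v₂ v₃) (h₃₄ : Commute v₃ v₄)
    (h₄₀ : Commute v₄ v₀) (h₀₂ : ¬Commute v₀ v₂) (h₀₃ : ¬Commute v₀ v₃) (h₁₃ : ¬Commute v₁ v₃)
    (h₁₄ : ¬Commute v₁ v₄) (h₂₄ : ¬Commute v₂ v₄) :
    Nonempty (cycleGraph 5 ↪g commGraph G) := by
  refine nonempty_embedding_of_commute_iff _ ![v₀, v₁, v₂, v₃, v₄] ?_ (by decide) (by decide)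
  intro i j
  fin_cases i <;> fin_cases j <;>
    simp +decide [h₀₁, h₁₂, h₂₃, h₃₄, h₄₀, h₀₁.symm, h₁₂.symm, h₂₃.symm,
      h₃₄.symm, h₄₀.symm, h₀₂, h₀₃, h₁₃, h₁₄, h₂₄, mt Commute.symm h₀₂, mt Commute.symm h₀₃,
      mt Commute.symm h₁₃, mt Commute.symm h₁₄, mt Commute.symm h₂₄]

end commGraph

theorem Subgroup.exists_commute_path_of_containsFourChain {G : Type*} [Group G] (K : Subgroup G)
    (h : (commGraph K).ContainsFourChain) :
    ∃ a ∈ K, ∃ b ∈ K, ∃ c ∈ K, ∃ d ∈ K, Commute a b ∧ Commute b c ∧ Commute c d ∧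
      ¬Commute a c ∧ ¬Commute a d ∧ ¬Commute b d := by
  obtain ⟨a, b, c, d, hab, hbc, hcd, hac, had, hbd, hac', had', hbd'⟩ := h.exists_path
  have hcomm {u v : {g : K // g ∉ Subgroup.center K}} (huv : u ≠ v) :
      Commute ((u : K) : G) (v : K) ↔ (commGraph K).Adj u v :=
    (commute_map_iff (f := K.subtype) K.subtype_injective).trans (and_iff_right huv).symm
  exact ⟨a, a.1.2, b, b.1.2, c, c.1.2, d, d.1.2, (hcomm hab.ne).mpr hab, (hcomm hbc.ne).mpr hbc,
    (hcomm hcd.ne).mpr hcd, (hcomm hac').not.mpr hac, (hcomm had').not.mpr had,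
    (hcomm hbd').not.mpr hbd⟩

theorem fourChain_centralizing_nonabelian_commGraph_not_isPerfect_general
    (G : Type*) [Group G] (K L : Subgroup G)
    (hcent : ∀ x ∈ K, ∀ y ∈ L, Commute x y)
    (hchain : (commGraph K).ContainsFourChain)
    (hL : ∃ x ∈ L, ∃ y ∈ L, x * y ≠ y * x) :
    ¬ (commGraph G).IsPerfectGraph := by
  obtain ⟨x, hx, y, hy, hxy⟩ := hL
  have hxy : ¬Commute x y := hxy
  obtain ⟨a, ha, b, hb, c, hc, d, hd, hab, hbc, hcd, hac, had, hbd⟩ :=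
    K.exists_commute_path_of_containsFourChain hchain
  have hKx {g : G} (hg : g ∈ K) : Commute g x := hcent g hg x hx
  have hKy {g : G} (hg : g ∈ K) : Commute g y := hcent g hg y hy
  obtain ⟨φ⟩ := commGraph.nonempty_cycleGraph_five_embedding
    (v₀ := c * x) (v₁ := d) (v₂ := y) (v₃ := a) (v₄ := b * x)
    (hcd.mul_left (hKx hd).symm) (hKy hd) (hKy ha).symm (hab.mul_right (hKx ha))
    ((hbc.mul_right (hKx hb)).mul_left ((hKx hc).symm.mul_right (Commute.refl x)))
    (fun h => hxy ((hKy hc).commute_mul_iff_right.mp h))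
    (fun h => hac ((hKx ha).symm.commute_mul_iff_left.mp h).symm)
    (fun h => had h.symm)
    (fun h => hbd ((hKx hd).symm.commute_mul_iff_left.mp h.symm))
    (fun h => hxy ((hKy hb).commute_mul_iff_right.mp h.symm))
  exact not_isPerfectGraph_of_cycleGraph_five_embedding φ

theorem fourChain_centralizing_nonabelian_commGraph_not_isPerfect
    (G : Type*) [Group G] [Finite G] (K L : Subgroup G)
    (hcent : ∀ x ∈ K, ∀ y ∈ L, Commute x y)
    (hchain : (commGraph K).ContainsFourChain)
    (hL : ∃ x ∈ L, ∃ y ∈ L, x * y ≠ y * x) :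
    ¬ (commGraph G).IsPerfectGraph :=
  fourChain_centralizing_nonabelian_commGraph_not_isPerfect_general G K L hcent hchain hL
end
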